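/- Let K be a differential field with derivation D, let k ⊆ K be a subfield with K/k a finite Galois extension with group G = Gal(K/k), and suppose every σ ∈ G commutes with D. Let u ∈ K and let f : G → Kˣ satisfy σ(u) − u = logD f(σ) for every σ ∈ G. Define c : G × G → Kˣ by c(σ,τ) := f(στ)·f(σ)⁻¹·σ(f(τ))⁻¹. Then every value of c is a constant (D(c(σ,τ)) = 0 for all σ,τ ∈ G), and c satisfies the 2-cocycle identity c(σ,τ)·c(στ,ρ) = σ(c(τ,ρ))·c(σ,τρ) for all σ,τ,ρ ∈ G. -/

import Mathlib

/-!
The map `c` is the multiplicative 2-coboundary of `σ ↦ f(σ)⁻¹`, and every 2-coboundary is a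
2-cocycle. For constancy, the logarithmic derivative turns products into sums and commutes with
`G`, so `logD c(σ,τ) = ((στ)u - u) - (σu - u) - σ(τu - u) = 0`.
-/

open groupCohomology

theorem groupCohomology.IsMulCoboundary₂.isMulCocycle₂ {G M : Type*} [Monoid G] [CommGroup M]
    [MulDistribMulAction G M] {c : G × G → M} (hc : IsMulCoboundary₂ c) : IsMulCocycle₂ c := by
  obtain ⟨x, hx⟩ := hc
  intro g h j
  apply Additive.ofMul.injective
  simp only [← hx, smul_mul', smul_div', mul_smul, ofMul_mul, ofMul_div, mul_assoc]
  abel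

section LeibnizRule

variable {K : Type*} [Field K] {D : K → K}

def logD (D : K → K) (x : K) : K := D x / x

theorem map_one_eq_zero_of_leibniz (hD : ∀ x y : K, D (x * y) = x * D y + D x * y) : D 1 = 0 := by
  simpa using hD 1 1

theorem logD_mul (hD : ∀ x y : K, D (x * y) = x * D y + D x * y) {x y : K} (hx : x ≠ 0)
    (hy : y ≠ 0) : logD D (x * y) = logD D x + logD D y := by
  simp only [logD, hD]
  field_simp
  ring

theorem logD_inv (hD : ∀ x y : K, D (x * y) = x * D y + D x * y) {x : K} (hx : x ≠ 0) :
    logD D x⁻¹ = -logD D x := by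
  have h := logD_mul hD hx (inv_ne_zero hx)
  rw [mul_inv_cancel₀ hx, logD, map_one_eq_zero_of_leibniz hD, zero_div] at h
  linear_combination -h

theorem logD_map {F : Type*} [FunLike F K K] [RingHomClass F K K] (σ : F)
    (hσ : ∀ x, σ (D x) = D (σ x)) (x : K) : logD D (σ x) = σ (logD D x) := by
  rw [logD, logD, map_div₀, hσ]

theorem logD_eq_zero_iff {x : K} (hx : x ≠ 0) : logD D x = 0 ↔ D x = 0 :=
  div_eq_zero_iff.trans (or_iff_left hx)

end LeibnizRule

theorem stmt2_general (k K : Type*) [Field k] [Field K] [Algebra k K]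
    (D : K → K)
    (hDmul : ∀ x y : K, D (x * y) = x * D y + D x * y)
    (hcomm : ∀ (σ : K ≃ₐ[k] K) (x : K), σ (D x) = D (σ x))
    (u : K) (f : (K ≃ₐ[k] K) → Kˣ)
    (hf : ∀ σ : K ≃ₐ[k] K, σ u - u = D (f σ : K) / (f σ : K))
    (c : (K ≃ₐ[k] K) → (K ≃ₐ[k] K) → Kˣ)
    (hcdef : ∀ σ τ : K ≃ₐ[k] K, (c σ τ : K) = (f (σ * τ) : K) * (f σ : K)⁻¹ * (σ (f τ : K))⁻¹) :
    (∀ σ τ : K ≃ₐ[k] K, D (c σ τ : K) = 0) ∧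
      (∀ σ τ ρ : K ≃ₐ[k] K,
        (c σ τ : K) * (c (σ * τ) ρ : K) = σ (c τ ρ : K) * (c σ (τ * ρ) : K)) := by
  have hcoboundary : IsMulCoboundary₂ (fun p : (K ≃ₐ[k] K) × (K ≃ₐ[k] K) => c p.1 p.2) :=
    ⟨fun σ => (f σ)⁻¹, fun σ τ => Units.ext (by simp [hcdef, div_eq_mul_inv]; ring)⟩
  have hlogD : ∀ σ, logD D (f σ) = σ u - u := fun σ => (hf σ).symm
  refine ⟨fun σ τ => ?_, fun σ τ ρ => ?_⟩
  · rw [← logD_eq_zero_iff (c σ τ).ne_zero, hcdef, logD_mul hDmul, logD_mul hDmul, logD_inv hDmul,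
      logD_inv hDmul, logD_map σ (hcomm σ), hlogD, hlogD, hlogD, map_sub, AlgEquiv.mul_apply]
    · ring
    all_goals simp
  · have h := congrArg Units.val (hcoboundary.isMulCocycle₂ σ τ ρ)
    simp only [Units.val_mul, AlgEquiv.smul_units_def, Units.coe_map] at h
    rw [mul_comm, h]
    rfl

/-- Let `K` be a differential field with derivation `D`, `k ⊆ K` a subfield
with `K/k` finite Galois with group `G`, each `σ ∈ G` commuting with `D`.  Let `u ∈ K` and
`f : G → Kˣ` satisfy `σ(u) − u = logD f(σ)`.  Then `c(σ,τ) := f(στ)·f(σ)⁻¹·σ(f(τ))⁻¹`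
takes constant values and satisfies the 2-cocycle identity
`c(σ,τ)·c(στ,ρ) = σ(c(τ,ρ))·c(σ,τρ)`. -/
theorem stmt2 (k K : Type*) [Field k] [Field K] [Algebra k K]
    [FiniteDimensional k K] [IsGalois k K]
    (D : K → K)
    (hDadd : ∀ x y : K, D (x + y) = D x + D y)
    (hDmul : ∀ x y : K, D (x * y) = x * D y + D x * y)
    (hcomm : ∀ (σ : K ≃ₐ[k] K) (x : K), σ (D x) = D (σ x))
    (u : K) (f : (K ≃ₐ[k] K) → Kˣ)
    (hf : ∀ σ : K ≃ₐ[k] K, σ u - u = D (f σ : K) / (f σ : K))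
    (c : (K ≃ₐ[k] K) → (K ≃ₐ[k] K) → Kˣ)
    (hcdef : ∀ σ τ : K ≃ₐ[k] K, (c σ τ : K) = (f (σ * τ) : K) * (f σ : K)⁻¹ * (σ (f τ : K))⁻¹) :
    (∀ σ τ : K ≃ₐ[k] K, D (c σ τ : K) = 0) ∧
      (∀ σ τ ρ : K ≃ₐ[k] K,
        (c σ τ : K) * (c (σ * τ) ρ : K) = σ (c τ ρ : K) * (c σ (τ * ρ) : K)) :=
  stmt2_general k K D hDmul hcomm u f hf c hcdef
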